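/- arXiv:2507.11452 — 2 statements merged into one kernel-verified Lean document; each statement's English description precedes it below -/
import Mathlib

section
/- In ℂ², let F = {f₁,f₂,f₃,f₄} = {(1,0), (0,1), (1,1), (1,−1)} with weights q = (3, 3, 3/2, 3/2). Then √(q_i) ‖f_i‖ = √3 for every i ∈ {1,2,3,4}, and moreover q_i ⟨f_i, f_i/3⟩ = 1 for every i (so with respect to the canonical dual the quantity √(q_i)‖S^{-1/2}f_i‖ is constant, i.e., the index set Λ₂ is empty); nevertheless, there exists a dual G of F distinct from the canonical dual {f_i/3} with max_{1 ≤ i ≤ 4} q_i |⟨f_i, g_i⟩| = 1. Hence constancy of √(q_i)‖f_i‖ (equivalently, emptiness of Λ₂ for a tight frame) does not imply that the canonical dual is the unique 1-erasure probability optimal dual. -/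
/-!
The frame is tight with bound `3` and `q_i ‖f_i‖² = 3` for every `i`, which gives the first two
claims. Other duals are obtained by adding to the canonical dual `{f_i / 3}` any family `{h_i}`
with `∑ ⟨f, f_i⟩ h_i = 0`; if moreover `h_i ⊥ f_i`, the diagonal products `⟨f_i, g_i⟩` do not
change. Taking for `h_i` a multiple of `f_i` turned by a right angle, with the multiples chosen
so that the sum vanishes, gives `h = (2 f₂, -2 f₁, f₄, -f₃)`.
-/

/-- The four vectors `(1,0), (0,1), (1,1), (1,−1)` in `ℂ²`. -/
noncomputable def tfFrame : Fin 4 → EuclideanSpace ℂ (Fin 2) :=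
  ![(WithLp.equiv 2 (Fin 2 → ℂ)).symm ![1, 0],
    (WithLp.equiv 2 (Fin 2 → ℂ)).symm ![0, 1],
    (WithLp.equiv 2 (Fin 2 → ℂ)).symm ![1, 1],
    (WithLp.equiv 2 (Fin 2 → ℂ)).symm ![1, -1]]

/-- The weights `q = (3, 3, 3/2, 3/2)`. -/
noncomputable def tfWeights : Fin 4 → ℝ := ![3, 3, 3/2, 3/2]

open scoped InnerProductSpace

theorem sqrt_mul_norm_eq_sqrt {E : Type*} [SeminormedAddCommGroup E] {q A : ℝ} {x : E}
    (hq : 0 ≤ q) (h : q * ‖x‖ ^ 2 = A) : √q * ‖x‖ = √A := by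
  rw [← h, Real.sqrt_mul hq, Real.sqrt_sq (norm_nonneg x)]

section Duals

variable {𝕜 E ι : Type*} [RCLike 𝕜] [NormedAddCommGroup E] [InnerProductSpace 𝕜 E] [Fintype ι]

/-- Mathlib's `⟪F i, f⟫_𝕜` is the paper's `⟨f, f_i⟩`. -/
def IsFrameDual (F G : ι → E) : Prop :=
  ∀ f, ∑ i, ⟪F i, f⟫_𝕜 • G i = f

theorem isFrameDual_inv_smul_of_tight {F : ι → E} {A : 𝕜}
    (hF : ∀ f, ∑ i, ⟪F i, f⟫_𝕜 • F i = A • f) (hA : A ≠ 0) :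
    IsFrameDual (𝕜 := 𝕜) F (fun i => A⁻¹ • F i) := fun f => by
  simp_rw [smul_comm _ A⁻¹, ← Finset.smul_sum, hF, inv_smul_smul₀ hA]

theorem IsFrameDual.add {F G H : ι → E} (hG : IsFrameDual (𝕜 := 𝕜) F G)
    (hH : ∀ f, ∑ i, ⟪F i, f⟫_𝕜 • H i = 0) : IsFrameDual (𝕜 := 𝕜) F (G + H) := fun f => by
  simp only [Pi.add_apply, smul_add, Finset.sum_add_distrib, hG f, hH f, add_zero]

theorem ofReal_mul_inner_inv_smul_self {q A : ℝ} {x : E} (h : q * ‖x‖ ^ 2 = A) (hA : A ≠ 0) :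
    (q : 𝕜) * ⟪(A : 𝕜)⁻¹ • x, x⟫_𝕜 = 1 := by
  rw [inner_smul_left, inner_self_eq_norm_sq_to_K, map_inv₀, RCLike.conj_ofReal, mul_left_comm,
    ← RCLike.ofReal_pow, ← RCLike.ofReal_mul, h, inv_mul_cancel₀ (RCLike.ofReal_ne_zero.mpr hA)]

end Duals

theorem tfWeights_nonneg (i : Fin 4) : 0 ≤ tfWeights i := by
  fin_cases i <;> norm_num [tfWeights]

theorem tfWeights_mul_norm_tfFrame_sq (i : Fin 4) : tfWeights i * ‖tfFrame i‖ ^ 2 = 3 := by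
  fin_cases i <;> simp [tfFrame, tfWeights, EuclideanSpace.norm_sq_eq] <;> norm_num

theorem tfFrame_tight (f : EuclideanSpace ℂ (Fin 2)) :
    ∑ i, ⟪tfFrame i, f⟫_ℂ • tfFrame i = (3 : ℂ) • f := by
  ext j
  fin_cases j <;> simp [tfFrame, Fin.sum_univ_four, PiLp.inner_apply, Fin.sum_univ_two] <;> ring

noncomputable def tfPerturbation : Fin 4 → EuclideanSpace ℂ (Fin 2) :=
  ![(2 : ℂ) • tfFrame 1, (-2 : ℂ) • tfFrame 0, tfFrame 3, -tfFrame 2]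

theorem tfPerturbation_sum_eq_zero (f : EuclideanSpace ℂ (Fin 2)) :
    ∑ i, ⟪tfFrame i, f⟫_ℂ • tfPerturbation i = 0 := by
  ext j
  fin_cases j <;>
    simp [tfPerturbation, tfFrame, Fin.sum_univ_four, PiLp.inner_apply, Fin.sum_univ_two] <;> ring

theorem inner_tfPerturbation_tfFrame (i : Fin 4) : ⟪tfPerturbation i, tfFrame i⟫_ℂ = 0 := by
  fin_cases i <;> simp [tfPerturbation, tfFrame, PiLp.inner_apply, Fin.sum_univ_two]

theorem tfPerturbation_ne_zero : tfPerturbation ≠ 0 := fun h => by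
  simpa [tfPerturbation, tfFrame] using congrFun (congrArg WithLp.ofLp (congrFun h 0)) 1

/-- counterexample to Corollary 2 of the original paper: For the tight
frame `F = {(1,0),(0,1),(1,1),(1,−1)}` of `ℂ²` with weights `q = (3, 3, 3/2, 3/2)`, one
has `√(q_i) ‖f_i‖ = √3` for every `i` and `q_i ⟨f_i, f_i/3⟩ = 1` for every `i` (so
`√(q_i)‖S^{-1/2} f_i‖` is constant, i.e. `Λ₂ = ∅`); nevertheless there is a dual `G` of
`F` distinct from the canonical dual `{f_i/3}` with `max_i q_i |⟨f_i, g_i⟩| = 1`.  Hence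
constancy of `√(q_i)‖f_i‖` does not imply uniqueness of the optimal dual.  The paper's
inner product `⟨a, b⟩` is Mathlib's `⟪b, a⟫_ℂ`. -/
theorem tfFrame_nonunique_optimal_dual :
    (∀ i, Real.sqrt (tfWeights i) * ‖tfFrame i‖ = Real.sqrt 3) ∧
    (∀ i, (tfWeights i : ℂ) * inner ℂ ((3 : ℂ)⁻¹ • tfFrame i) (tfFrame i) = 1) ∧
    ∃ G : Fin 4 → EuclideanSpace ℂ (Fin 2),
      G ≠ (fun i => (3 : ℂ)⁻¹ • tfFrame i) ∧
      (∀ f : EuclideanSpace ℂ (Fin 2), ∑ i, (inner ℂ (tfFrame i) f : ℂ) • G i = f) ∧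
      (⨆ i, tfWeights i * ‖(inner ℂ (G i) (tfFrame i) : ℂ)‖) = 1 := by
  have hcanonical (i : Fin 4) : (tfWeights i : ℂ) * ⟪(3 : ℂ)⁻¹ • tfFrame i, tfFrame i⟫_ℂ = 1 := by
    have h := ofReal_mul_inner_inv_smul_self (𝕜 := ℂ) (tfWeights_mul_norm_tfFrame_sq i) three_ne_zero
    simp only [RCLike.ofReal_ofNat] at h
    exact h
  refine ⟨fun i => sqrt_mul_norm_eq_sqrt (tfWeights_nonneg i) (tfWeights_mul_norm_tfFrame_sq i),
    hcanonical, (fun i => (3 : ℂ)⁻¹ • tfFrame i) + tfPerturbation, ?_, ?_, ?_⟩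
  · simpa using tfPerturbation_ne_zero
  · exact (isFrameDual_inv_smul_of_tight tfFrame_tight three_ne_zero).add tfPerturbation_sum_eq_zero
  · have hweighted (i : Fin 4) :
        tfWeights i * ‖⟪((fun i => (3 : ℂ)⁻¹ • tfFrame i) + tfPerturbation) i, tfFrame i⟫_ℂ‖ = 1 := by
      rw [Pi.add_apply, inner_add_left, inner_tfPerturbation_tfFrame, add_zero,
        ← Real.norm_of_nonneg (tfWeights_nonneg i), ← Complex.norm_real, ← norm_mul, hcanonical,
        norm_one]
    simp only [hweighted, ciSup_const]
end

section
/- Let H be a finite-dimensional complex inner product space, let F = {f_i}_{i=1}^M be a frame for H with frame operator S, and let {q_i}_{i=1}^M be positive weights. With c² = max_i q_i⟨f_i, S⁻¹f_i⟩, Λ₁ = { i : q_i⟨f_i, S⁻¹f_i⟩ = c² }, and H₁ ∩ H₂ = {0} where H_j = span{f_i : i ∈ Λ_j}: if G = {g_i} is any dual of F, written g_i = S⁻¹f_i + u_i, then Re(∑_{i ∈ Λ₁} ⟨f_i, u_i⟩) = 0; consequently either Re⟨f_i,u_i⟩ = 0 for all i ∈ Λ₁, or there exists j ∈ Λ₁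 with Re⟨f_j, u_j⟩ > 0, and in the latter case max_{1 ≤ i ≤ M} q_i |⟨f_i, g_i⟩| > c². -/
/-!
The perturbation `u = G - S⁻¹F` of a dual satisfies `∑ᵢ ⟨f, fᵢ⟩ uᵢ = 0`, hence, passing to the
adjoint, `∑ᵢ ⟨uᵢ, f⟩ fᵢ = 0` for every `f`. Because `H₁ ∩ H₂ = {0}`, the part of this sum over
`Λ₁` (which lies in `H₁ ∩ H₂`) vanishes on its own; it is a finite-rank operator whose trace is
`∑_{i ∈ Λ₁} ⟨fᵢ, uᵢ⟩`, so that sum is `0`. A positive real part at some `j ∈ Λ₁` then pushes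
`q_j Re⟨f_j, g_j⟩` above `q_j ⟨f_j, S⁻¹f_j⟩ = c²`.
-/

open Finset

section InnerProduct

variable {𝕜 E ι : Type*} [RCLike 𝕜] [NormedAddCommGroup E] [InnerProductSpace 𝕜 E]

local notation "⟪" x ", " y "⟫" => inner 𝕜 x y

theorem sum_inner_smul_symm_apply_eq_self [Fintype ι] (F : ι → E) (S : E ≃ₗ[𝕜] E)
    (hS : ∀ f, S f = ∑ i, ⟪F i, f⟫ • F i) (f : E) :
    ∑ i, ⟪F i, f⟫ • S.symm (F i) = f := by
  simpa only [hS, map_sum, map_smul] using S.symm_apply_apply f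

theorem sum_inner_smul_eq_zero_swap [Fintype ι] {u v : ι → E}
    (h : ∀ x, ∑ i, ⟪v i, x⟫ • u i = 0) (x : E) : ∑ i, ⟪u i, x⟫ • v i = 0 := by
  refine ext_inner_left 𝕜 fun y => ?_
  calc ⟪y, ∑ i, ⟪u i, x⟫ • v i⟫ = ⟪∑ i, ⟪v i, y⟫ • u i, x⟫ := by
        simp only [inner_sum, sum_inner, inner_smul_left, inner_smul_right, inner_conj_symm,
          mul_comm]
    _ = ⟪y, 0⟫ := by rw [h, inner_zero_left, inner_zero_right]

theorem sum_inner_eq_zero_of_sum_inner_smul_eq_zero [FiniteDimensional 𝕜 E] (s : Finset ι)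
    {u v : ι → E} (h : ∀ x, ∑ i ∈ s, ⟪u i, x⟫ • v i = 0) : ∑ i ∈ s, ⟪u i, v i⟫ = 0 := by
  let b := stdOrthonormalBasis 𝕜 E
  calc ∑ i ∈ s, ⟪u i, v i⟫ = ∑ i ∈ s, ∑ k, ⟪u i, b k⟫ * ⟪b k, v i⟫ :=
        sum_congr rfl fun i _ => (b.sum_inner_mul_inner (u i) (v i)).symm
    _ = ∑ k, ⟪b k, ∑ i ∈ s, ⟪u i, b k⟫ • v i⟫ := by
        rw [sum_comm]
        simp only [inner_sum, inner_smul_right]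
    _ = 0 := by simp only [h, inner_zero_right, sum_const_zero]

theorem lt_mul_norm_inner_add {q c : ℝ} {a u b : E} (hq : 0 < q) (hc : q * RCLike.re ⟪a, b⟫ = c)
    (hu : 0 < RCLike.re ⟪u, b⟫) : c < q * ‖⟪a + u, b⟫‖ :=
  calc c < q * RCLike.re ⟪a + u, b⟫ := by
        rw [inner_add_left, map_add, mul_add, hc]
        exact lt_add_of_pos_right c (mul_pos hq hu)
    _ ≤ q * ‖⟪a + u, b⟫‖ := mul_le_mul_of_nonneg_left (RCLike.re_le_norm _) hq.le

end InnerProduct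

theorem Submodule.sum_smul_eq_zero_of_disjoint_span {R M ι : Type*} [Ring R] [AddCommGroup M]
    [Module R M] [Fintype ι] {v : ι → M} {s : Finset ι} {a : ι → R}
    (hs : Disjoint (span R (v '' s)) (span R (v '' (↑s)ᶜ))) (h : ∑ i, a i • v i = 0) :
    ∑ i ∈ s, a i • v i = 0 := by
  classical
  have hmem : ∀ t : Set ι, ∀ t' : Finset ι, ↑t' ⊆ t → ∑ i ∈ t', a i • v i ∈ span R (v '' t) :=
    fun t t' ht => sum_mem fun i hi =>
      smul_mem _ _ (subset_span (Set.mem_image_of_mem v (ht hi)))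
  refine disjoint_def.mp hs _ (hmem _ s subset_rfl) ?_
  rw [← sum_add_sum_compl s, add_eq_zero_iff_eq_neg] at h
  rw [h]
  exact neg_mem (hmem _ sᶜ (by simp))

theorem Finset.forall_eq_zero_or_exists_pos_of_sum_eq_zero {ι α : Type*} [AddCommMonoid α]
    [LinearOrder α] [IsOrderedAddMonoid α] {s : Finset ι} {f : ι → α}
    (h : ∑ i ∈ s, f i = 0) : (∀ i ∈ s, f i = 0) ∨ ∃ j ∈ s, 0 < f j := by
  refine or_iff_not_imp_right.mpr fun hpos => (sum_eq_zero_iff_of_nonpos ?_).mp h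
  simpa only [not_exists, not_and, not_lt] using hpos
theorem dual_perturbation_trace_zero_and_strict_increase_general
    {H : Type*} [NormedAddCommGroup H] [InnerProductSpace ℂ H] [FiniteDimensional ℂ H]
    {M : ℕ}
    (F : Fin M → H)
    (S : H ≃ₗ[ℂ] H) (hS : ∀ f : H, S f = ∑ i, (inner ℂ (F i) f : ℂ) • F i)
    (q : Fin M → ℝ) (hq : ∀ i, 0 < q i)
    (c2 : ℝ)
    (Λ₁ : Finset (Fin M))
    (hΛ₁ : Λ₁ = Finset.univ.filter (fun i => q i * (inner ℂ (S.symm (F i)) (F i) : ℂ).re = c2))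
    (hint : Submodule.span ℂ (F '' (Λ₁ : Set (Fin M))) ⊓
            Submodule.span ℂ (F '' ((Λ₁ : Set (Fin M))ᶜ)) = ⊥)
    (G : Fin M → H) (hG : ∀ f : H, ∑ i, (inner ℂ (F i) f : ℂ) • G i = f)
    (u : Fin M → H) (hu : ∀ i, u i = G i - S.symm (F i)) :
    (∑ i ∈ Λ₁, (inner ℂ (u i) (F i) : ℂ)).re = 0 ∧
    ((∀ i ∈ Λ₁, (inner ℂ (u i) (F i) : ℂ).re = 0) ∨
      ∃ j ∈ Λ₁, 0 < (inner ℂ (u j) (F j) : ℂ).re) ∧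
    ((∃ j ∈ Λ₁, 0 < (inner ℂ (u j) (F j) : ℂ).re) →
      c2 < ⨆ i, q i * ‖inner ℂ (G i) (F i)‖) := by
  have hperturb : ∀ f, ∑ i, (inner ℂ (u i) f : ℂ) • F i = 0 :=
    sum_inner_smul_eq_zero_swap fun f => by
      simp only [hu, smul_sub, sum_sub_distrib, hG, sum_inner_smul_symm_apply_eq_self F S hS,
        sub_self]
  have htrace : ∑ i ∈ Λ₁, (inner ℂ (u i) (F i) : ℂ) = 0 :=
    sum_inner_eq_zero_of_sum_inner_smul_eq_zero Λ₁ fun f =>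
      Submodule.sum_smul_eq_zero_of_disjoint_span (disjoint_iff.mpr hint) (hperturb f)
  have hre : (∑ i ∈ Λ₁, (inner ℂ (u i) (F i) : ℂ)).re = 0 := by rw [htrace, Complex.zero_re]
  refine ⟨hre, forall_eq_zero_or_exists_pos_of_sum_eq_zero (by rwa [Complex.re_sum] at hre), ?_⟩
  rintro ⟨j, hj, hpos⟩
  have hjc : q j * (inner ℂ (S.symm (F j)) (F j) : ℂ).re = c2 := by
    rw [hΛ₁] at hj
    exact (mem_filter.mp hj).2
  calc c2 < q j * ‖inner ℂ (S.symm (F j) + u j) (F j)‖ := lt_mul_norm_inner_add (hq j) hjc hpos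
    _ = q j * ‖inner ℂ (G j) (F j)‖ := by rw [hu, add_sub_cancel]
    _ ≤ ⨆ i, q i * ‖inner ℂ (G i) (F i)‖ :=
        le_ciSup (f := fun i => q i * ‖inner ℂ (G i) (F i)‖) (Set.finite_range _).bddAbove j

/-- With the notation of the corrected Theorem 1 (frame `F`, frame operator
`S`, positive weights `q`, `c² = max_i q_i ⟨f_i, S⁻¹ f_i⟩`,
`Λ₁ = {i : q_i ⟨f_i, S⁻¹ f_i⟩ = c²}`, `H₁ ⊓ H₂ = {0}` for the spans over `Λ₁` and its
complement): if `G` is any dual of `F`, written `g_i = S⁻¹ f_i + u_i`, then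
`Re(∑_{i ∈ Λ₁} ⟨f_i, u_i⟩) = 0`; consequently either `Re⟨f_i, u_i⟩ = 0` for all `i ∈ Λ₁`
or some `j ∈ Λ₁` has `Re⟨f_j, u_j⟩ > 0`, and in the latter case
`max_i q_i |⟨f_i, g_i⟩| > c²`.  The paper's inner product `⟨a, b⟩` is Mathlib's
`⟪b, a⟫_ℂ`. -/
theorem dual_perturbation_trace_zero_and_strict_increase
    {H : Type*} [NormedAddCommGroup H] [InnerProductSpace ℂ H] [FiniteDimensional ℂ H]
    {M : ℕ} (hM : 0 < M)
    (F : Fin M → H) (hF : Submodule.span ℂ (Set.range F) = ⊤)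
    (S : H ≃ₗ[ℂ] H) (hS : ∀ f : H, S f = ∑ i, (inner ℂ (F i) f : ℂ) • F i)
    (q : Fin M → ℝ) (hq : ∀ i, 0 < q i)
    (c2 : ℝ) (hc2 : c2 = ⨆ i, q i * (inner ℂ (S.symm (F i)) (F i) : ℂ).re)
    (Λ₁ : Finset (Fin M))
    (hΛ₁ : Λ₁ = Finset.univ.filter (fun i => q i * (inner ℂ (S.symm (F i)) (F i) : ℂ).re = c2))
    (hint : Submodule.span ℂ (F '' (Λ₁ : Set (Fin M))) ⊓
            Submodule.span ℂ (F '' ((Λ₁ : Set (Fin M))ᶜ)) = ⊥)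
    (G : Fin M → H) (hG : ∀ f : H, ∑ i, (inner ℂ (F i) f : ℂ) • G i = f)
    (u : Fin M → H) (hu : ∀ i, u i = G i - S.symm (F i)) :
    (∑ i ∈ Λ₁, (inner ℂ (u i) (F i) : ℂ)).re = 0 ∧
    ((∀ i ∈ Λ₁, (inner ℂ (u i) (F i) : ℂ).re = 0) ∨
      ∃ j ∈ Λ₁, 0 < (inner ℂ (u j) (F j) : ℂ).re) ∧
    ((∃ j ∈ Λ₁, 0 < (inner ℂ (u j) (F j) : ℂ).re) →
      c2 < ⨆ i, q i * ‖inner ℂ (G i) (F i)‖) :=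
  dual_perturbation_trace_zero_and_strict_increase_general F S hS q hq c2 Λ₁ hΛ₁ hint G hG u hu
end
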